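/- arXiv:1702.00609 — 6 statements merged into one kernel-verified Lean document; each statement's English description precedes it below -/
import Mathlib

section
/- Under the two-groups model with zero assumptions A3 and A4 and a unique null median μ₀: (i) F(μ₀) = G(μ₀) = π₀/2; (ii) F(t) > G(t) for every t > μ₀; (iii) F(t) < G(t) for every t < μ₀. Consequently, μ₀ is the unique solution of the equation F(t) = G(t). -/
/-!
At `μ₀` both alternative components vanish (A3 for `F₁`, A4 for `G₁`), so `F` and `G` reduce to
`π₀ F₀(μ₀) = π₀ (1 - F₀(μ₀)) = π₀/2`. Above `μ₀` the term `G₁` vanishes, so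
`G = π₀ (1 - F₀) < π₀ F₀ ≤ F` because `F₀ > 1/2` there; below `μ₀` symmetrically `F₁` vanishes and
`F = π₀ F₀ < π₀ (1 - F₀) ≤ G`. A strict crossing at `μ₀` leaves no other solution of `F = G`.
-/

lemma eq_of_lt_of_gt_of_apply_eq {α β : Type*} [LinearOrder α] [Preorder β] {f g : α → β} {a t : α}
    (hbelow : ∀ s, s < a → f s < g s) (habove : ∀ s, a < s → g s < f s) (h : f t = g t) :
    t = a := by
  rcases lt_trichotomy t a with hlt | heq | hgt
  · exact absurd h (hbelow t hlt).ne
  · exact heq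
  · exact absurd h (habove t hgt).ne'

lemma mul_lt_mul_add_one_sub_mul {π x y z : ℝ} (hπ : 0 < π) (hπ₁ : π ≤ 1) (hxy : x < y)
    (hz : 0 ≤ z) : π * x < π * y + (1 - π) * z := by
  linarith [mul_lt_mul_of_pos_left hxy hπ, mul_nonneg (sub_nonneg.mpr hπ₁) hz]

theorem two_groups_median_crossing_general
    (π₀ : ℝ) (hπ₀pos : 0 < π₀) (hπ₀le : π₀ ≤ 1)
    (F₀ F₁ G₁ : ℝ → ℝ) (μ₀ : ℝ)
    (hF₁range : ∀ t, 0 ≤ F₁ t ∧ F₁ t ≤ 1)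
    (hG₁range : ∀ t, 0 ≤ G₁ t ∧ G₁ t ≤ 1)
    (hmed : F₀ μ₀ = 1 / 2)
    (hmed_above : ∀ t, μ₀ < t → 1 / 2 < F₀ t)
    (hmed_below : ∀ t, t < μ₀ → F₀ t < 1 / 2)
    (hA3 : ∀ t, t ≤ μ₀ → F₁ t = 0)
    (hA4 : ∀ t, μ₀ ≤ t → G₁ t = 0)
    (F G : ℝ → ℝ)
    (hF : ∀ t, F t = π₀ * F₀ t + (1 - π₀) * F₁ t)
    (hG : ∀ t, G t = π₀ * (1 - F₀ t) + (1 - π₀) * G₁ t) :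
    F μ₀ = π₀ / 2 ∧ G μ₀ = π₀ / 2 ∧
      (∀ t, μ₀ < t → G t < F t) ∧
      (∀ t, t < μ₀ → F t < G t) ∧
      (∀ t, F t = G t → t = μ₀) := by
  have habove : ∀ t, μ₀ < t → G t < F t := by
    intro t ht
    rw [hF, hG, hA4 t ht.le, mul_zero, add_zero]
    exact mul_lt_mul_add_one_sub_mul hπ₀pos hπ₀le (by linarith [hmed_above t ht]) (hF₁range t).1
  have hbelow : ∀ t, t < μ₀ → F t < G t := by
    intro t ht
    rw [hF, hG, hA3 t ht.le, mul_zero, add_zero]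
    exact mul_lt_mul_add_one_sub_mul hπ₀pos hπ₀le (by linarith [hmed_below t ht]) (hG₁range t).1
  refine ⟨?_, ?_, habove, hbelow, fun t h => eq_of_lt_of_gt_of_apply_eq hbelow habove h⟩
  · rw [hF, hmed, hA3 μ₀ le_rfl]; ring
  · rw [hG, hmed, hA4 μ₀ le_rfl]; ring

/-- Under the two-groups model `F = π₀F₀ + π₁F₁`,
`G = π₀G₀ + π₁G₁` with `G₀ = 1 - F₀`, zero assumptions A3 (`F₁(t) = 0` for
`t ≤ μ₀`) and A4 (`G₁(t) = 0` for `t ≥ μ₀`), and a unique null median `μ₀`: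
(i) `F(μ₀) = G(μ₀) = π₀/2`; (ii) `F(t) > G(t)` for all `t > μ₀`;
(iii) `F(t) < G(t)` for all `t < μ₀`; hence `μ₀` is the unique solution of
`F(t) = G(t)`. -/
theorem two_groups_median_crossing
    (π₀ : ℝ) (hπ₀pos : 0 < π₀) (hπ₀le : π₀ ≤ 1)
    (F₀ F₁ G₁ : ℝ → ℝ) (μ₀ : ℝ)
    (hF₀mono : Monotone F₀) (hF₀range : ∀ t, 0 ≤ F₀ t ∧ F₀ t ≤ 1)
    (hF₁mono : Monotone F₁) (hF₁range : ∀ t, 0 ≤ F₁ t ∧ F₁ t ≤ 1)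
    (hG₁anti : Antitone G₁) (hG₁range : ∀ t, 0 ≤ G₁ t ∧ G₁ t ≤ 1)
    (hmed : F₀ μ₀ = 1 / 2)
    (hmed_above : ∀ t, μ₀ < t → 1 / 2 < F₀ t)
    (hmed_below : ∀ t, t < μ₀ → F₀ t < 1 / 2)
    (hA3 : ∀ t, t ≤ μ₀ → F₁ t = 0)
    (hA4 : ∀ t, μ₀ ≤ t → G₁ t = 0)
    (F G : ℝ → ℝ)
    (hF : ∀ t, F t = π₀ * F₀ t + (1 - π₀) * F₁ t)
    (hG : ∀ t, G t = π₀ * (1 - F₀ t) + (1 - π₀) * G₁ t) :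
    F μ₀ = π₀ / 2 ∧ G μ₀ = π₀ / 2 ∧
      (∀ t, μ₀ < t → G t < F t) ∧
      (∀ t, t < μ₀ → F t < G t) ∧
      (∀ t, F t = G t → t = μ₀) :=
  two_groups_median_crossing_general π₀ hπ₀pos hπ₀le F₀ F₁ G₁ μ₀ hF₁range hG₁range hmed hmed_above
    hmed_below hA3 hA4 F G hF hG
end

section
/- Let F : ℝ → ℝ be nondecreasing and G : ℝ → ℝ be nonincreasing with F(t) < G(t) for all t < μ₀ and F(t) > G(t) for all t > μ₀. Let (F̄ₙ) and (Ḡₙ) be sequences of random functions on ℝ such that sup_t |F̄ₙ(t) − F(t)| → 0 and sup_t |Ḡₙ(t) − G(t)| → 0 in probability, and let (μ̂ₙ) be a sequence of real random variables satisfying F̄ₙ(μ̂ₙ) = Ḡₙ(μ̂ₙ) almost surely. Then μ̂ₙ → μ₀ in probability. -/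
open MeasureTheory Filter

/-- If `F` is nondecreasing, `G` is nonincreasing, `F < G` left of `μ₀`
and `F > G` right of `μ₀`, the random functions `F̄ₙ, Ḡₙ` converge uniformly in
probability to `F, G`, and `μ̂ₙ` solves `F̄ₙ(μ̂ₙ) = Ḡₙ(μ̂ₙ)` almost surely, then
`μ̂ₙ → μ₀` in probability. -/
theorem crossing_point_estimator_consistent
    {Ω : Type*} [MeasurableSpace Ω] (μ : Measure Ω) [IsProbabilityMeasure μ]
    (F G : ℝ → ℝ) (μ₀ : ℝ)
    (hFmono : Monotone F) (hGanti : Antitone G)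
    (hlt : ∀ t, t < μ₀ → F t < G t) (hgt : ∀ t, μ₀ < t → G t < F t)
    (Fbar Gbar : ℕ → Ω → ℝ → ℝ)
    (hFbarMeas : ∀ n, Measurable fun p : Ω × ℝ => Fbar n p.1 p.2)
    (hGbarMeas : ∀ n, Measurable fun p : Ω × ℝ => Gbar n p.1 p.2)
    (muhat : ℕ → Ω → ℝ) (hmuhatMeas : ∀ n, Measurable (muhat n))
    (hFconv : ∀ δ : ℝ, 0 < δ →
      Tendsto (fun n => μ {ω | ∃ t : ℝ, δ < |Fbar n ω t - F t|}) atTop (nhds 0))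
    (hGconv : ∀ δ : ℝ, 0 < δ →
      Tendsto (fun n => μ {ω | ∃ t : ℝ, δ < |Gbar n ω t - G t|}) atTop (nhds 0))
    (hcross : ∀ n, ∀ᵐ ω ∂μ, Fbar n ω (muhat n ω) = Gbar n ω (muhat n ω)) :
    ∀ δ : ℝ, 0 < δ →
      Tendsto (fun n => μ {ω | δ < |muhat n ω - μ₀|}) atTop (nhds 0) := by
  intro δ hδ
  set c₁ := G (μ₀ - δ) - F (μ₀ - δ) with hc₁
  set c₂ := F (μ₀ + δ) - G (μ₀ + δ) with hc₂
  have hc₁pos : 0 < c₁ := by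
    have := hlt (μ₀ - δ) (by linarith); simp only [hc₁]; linarith
  have hc₂pos : 0 < c₂ := by
    have := hgt (μ₀ + δ) (by linarith); simp only [hc₂]; linarith
  set ε := min c₁ c₂ / 3 with hε
  have hminpos : 0 < min c₁ c₂ := lt_min hc₁pos hc₂pos
  have hεpos : 0 < ε := by simp only [hε]; linarith
  have key : ∀ n, {ω | δ < |muhat n ω - μ₀|} ⊆
      ({ω | ∃ t : ℝ, ε < |Fbar n ω t - F t|} ∪ {ω | ∃ t : ℝ, ε < |Gbar n ω t - G t|})
        ∪ {ω | Fbar n ω (muhat n ω) ≠ Gbar n ω (muhat n ω)} := by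
    intro n ω hω
    by_contra h
    simp only [Set.mem_union, Set.mem_setOf_eq, not_or, not_exists, not_lt, ne_eq,
      not_not] at h
    obtain ⟨⟨hFb, hGb⟩, heq⟩ := h
    set m := muhat n ω with hm
    have h1 : |Fbar n ω m - F m| ≤ ε := hFb m
    have h2 : |Gbar n ω m - G m| ≤ ε := hGb m
    rw [abs_le] at h1 h2
    have hω' : δ < |m - μ₀| := hω
    rcases lt_abs.mp hω' with hcase | hcase
    · -- m > μ₀ + δ
      have hle : μ₀ + δ ≤ m := by linarith
      have hF : F (μ₀ + δ) ≤ F m := hFmono hle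
      have hG : G m ≤ G (μ₀ + δ) := hGanti hle
      have : min c₁ c₂ ≤ c₂ := min_le_right _ _
      simp only [hε] at h1 h2
      simp only [hc₂] at *
      linarith
    · -- m < μ₀ - δ
      have hle : m ≤ μ₀ - δ := by linarith
      have hF : F m ≤ F (μ₀ - δ) := hFmono hle
      have hG : G (μ₀ - δ) ≤ G m := hGanti hle
      have : min c₁ c₂ ≤ c₁ := min_le_left _ _
      simp only [hε] at h1 h2
      simp only [hc₁] at *
      linarith
  have hbound : ∀ n, μ {ω | δ < |muhat n ω - μ₀|} ≤
      μ {ω | ∃ t : ℝ, ε < |Fbar n ω t - F t|} + μ {ω | ∃ t : ℝ, ε < |Gbar n ω t - G t|} := by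
    intro n
    have hN : μ {ω | ¬ Fbar n ω (muhat n ω) = Gbar n ω (muhat n ω)} = 0 := by
      have := hcross n; rwa [ae_iff] at this
    calc μ {ω | δ < |muhat n ω - μ₀|}
        ≤ μ (({ω | ∃ t : ℝ, ε < |Fbar n ω t - F t|} ∪ {ω | ∃ t : ℝ, ε < |Gbar n ω t - G t|})
            ∪ {ω | Fbar n ω (muhat n ω) ≠ Gbar n ω (muhat n ω)}) := measure_mono (key n)
      _ ≤ μ ({ω | ∃ t : ℝ, ε < |Fbar n ω t - F t|} ∪ {ω | ∃ t : ℝ, ε < |Gbar n ω t - G t|})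
            + μ {ω | Fbar n ω (muhat n ω) ≠ Gbar n ω (muhat n ω)} := measure_union_le _ _
      _ = μ ({ω | ∃ t : ℝ, ε < |Fbar n ω t - F t|} ∪ {ω | ∃ t : ℝ, ε < |Gbar n ω t - G t|}) := by
            rw [show {ω | Fbar n ω (muhat n ω) ≠ Gbar n ω (muhat n ω)} =
              {ω | ¬ Fbar n ω (muhat n ω) = Gbar n ω (muhat n ω)} from rfl, hN, add_zero]
      _ ≤ μ {ω | ∃ t : ℝ, ε < |Fbar n ω t - F t|} + μ {ω | ∃ t : ℝ, ε < |Gbar n ω t - G t|} :=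
            measure_union_le _ _
  have hsum : Tendsto (fun n => μ {ω | ∃ t : ℝ, ε < |Fbar n ω t - F t|}
      + μ {ω | ∃ t : ℝ, ε < |Gbar n ω t - G t|}) atTop (nhds 0) := by
    have := (hFconv ε hεpos).add (hGconv ε hεpos)
    simpa using this
  exact tendsto_of_tendsto_of_tendsto_of_le_of_le tendsto_const_nhds hsum
    (fun n => zero_le) hbound
end

section
/- Let π₀ ∈ (0,1] and let F : ℝ → ℝ be nondecreasing, continuous at μ₀, with F(μ₀) = π₀/2; let G : ℝ → ℝ be nonincreasing with F(t) < G(t) for t < μ₀ and F(t) > G(t) for t > μ₀. Let (F̄ₙ), (Ḡₙ) be sequences of random functions with sup_t |F̄ₙ(t) − F(t)| → 0 and sup_t |Ḡₙ(t) − G(t)| → 0 in probability, and let (μ̂ₙ) satisfy F̄ₙ(μ̂ₙ) = Ḡₙ(μ̂ₙ) almost surely. Then the empirical null-proportion estimator π̂₀ₙ = min(2 F̄ₙ(μ̂ₙ), 1) converges in probability to π₀. -/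
open MeasureTheory Filter

/-!
If `F̄ₙ` and `Ḡₙ` are uniformly `ε`-close to `F` and `G`, the common value `y = F̄ₙ(μ̂ₙ) = Ḡₙ(μ̂ₙ)`
is `ε`-close to both `F(μ̂ₙ)` and `G(μ̂ₙ)`. Outside `(μ₀ - η, μ₀ + η)` the gap `|F - G|` is at
least its (positive) value at `μ₀ ± η` by monotonicity, so for small `ε` the point `μ̂ₙ` lies
within `η` of `μ₀`, and continuity of `F` at `μ₀` puts `y` near `F(μ₀) = π₀/2`. Hence the
estimator is near `π₀` outside an event of vanishing probability.
-/

section Crossing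

variable {F G : ℝ → ℝ} {μ₀ : ℝ}

lemma abs_sub_lt_of_near_crossing (hF : Monotone F) (hG : Antitone G)
    (hlt : ∀ t, t < μ₀ → F t < G t) (hgt : ∀ t, μ₀ < t → G t < F t) {η : ℝ} (hη : 0 < η) :
    ∃ ε > 0, ∀ x y, |y - F x| ≤ ε → |y - G x| ≤ ε → |x - μ₀| < η := by
  set a := G (μ₀ - η) - F (μ₀ - η)
  set b := F (μ₀ + η) - G (μ₀ + η)
  have ha : 0 < a := sub_pos.mpr (hlt _ (by linarith))
  have hb : 0 < b := sub_pos.mpr (hgt _ (by linarith))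
  have hεa := min_le_left a b
  have hεb := min_le_right a b
  refine ⟨min a b / 3, by positivity, fun x y hFx hGx => abs_lt.mpr ⟨?_, ?_⟩⟩ <;>
    rw [abs_le] at hFx hGx <;> by_contra! hx
  · have := hF (show x ≤ μ₀ - η by linarith)
    have := hG (show x ≤ μ₀ - η by linarith)
    linarith
  · have := hF (show μ₀ + η ≤ x by linarith)
    have := hG (show μ₀ + η ≤ x by linarith)
    linarith

lemma abs_sub_lt_of_near_crossing_value (hF : Monotone F) (hFcont : ContinuousAt F μ₀)
    (hG : Antitone G) (hlt : ∀ t, t < μ₀ → F t < G t) (hgt : ∀ t, μ₀ < t → G t < F t)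
    {δ : ℝ} (hδ : 0 < δ) :
    ∃ ε > 0, ∀ x y, |y - F x| ≤ ε → |y - G x| ≤ ε → |y - F μ₀| < δ := by
  obtain ⟨η, hη, hFη⟩ := Metric.continuousAt_iff.mp hFcont (δ / 2) (half_pos hδ)
  obtain ⟨ε, hε, hnear⟩ := abs_sub_lt_of_near_crossing hF hG hlt hgt hη
  refine ⟨min ε (δ / 2), by positivity, fun x y hFx hGx => ?_⟩
  have hFx_near : |F x - F μ₀| < δ / 2 := hFη (hnear x y (hFx.trans (min_le_left _ _))
    (hGx.trans (min_le_left _ _)))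
  calc |y - F μ₀| ≤ |y - F x| + |F x - F μ₀| := abs_sub_le _ _ _
    _ < δ := by linarith [hFx.trans (min_le_right ε (δ / 2))]

end Crossing

lemma abs_min_two_mul_one_sub_le {π₀ : ℝ} (hπ₀ : π₀ ≤ 1) (y : ℝ) :
    |min (2 * y) 1 - π₀| ≤ 2 * |y - π₀ / 2| := by
  calc |min (2 * y) 1 - π₀| = |min (2 * y) 1 - min π₀ 1| := by rw [min_eq_left hπ₀]
    _ ≤ max |2 * y - π₀| |1 - 1| := abs_min_sub_min_le_max _ _ _ _
    _ = 2 * |y - π₀ / 2| := by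
      rw [sub_self, abs_zero, max_eq_left (abs_nonneg _), ← abs_two, ← abs_mul, abs_two]
      ring_nf

lemma tendsto_measure_zero_of_ae_subset_union {Ω : Type*} [MeasurableSpace Ω] {μ : Measure Ω}
    {A B C : ℕ → Set Ω} (hABC : ∀ n, A n ≤ᵐ[μ] (B n ∪ C n : Set Ω))
    (hB : Tendsto (fun n => μ (B n)) atTop (nhds 0))
    (hC : Tendsto (fun n => μ (C n)) atTop (nhds 0)) :
    Tendsto (fun n => μ (A n)) atTop (nhds 0) :=
  tendsto_of_tendsto_of_tendsto_of_le_of_le tendsto_const_nhds (by simpa using hB.add hC)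
    (fun _ => zero_le) fun n => (measure_mono_ae (hABC n)).trans (measure_union_le _ _)

theorem null_proportion_estimator_consistent_general
    {Ω : Type*} [MeasurableSpace Ω] (μ : Measure Ω)
    (π₀ : ℝ) (hπ₀le : π₀ ≤ 1)
    (F G : ℝ → ℝ) (μ₀ : ℝ)
    (hFmono : Monotone F) (hFcont : ContinuousAt F μ₀) (hFmed : F μ₀ = π₀ / 2)
    (hGanti : Antitone G)
    (hlt : ∀ t, t < μ₀ → F t < G t) (hgt : ∀ t, μ₀ < t → G t < F t)
    (Fbar Gbar : ℕ → Ω → ℝ → ℝ)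
    (muhat : ℕ → Ω → ℝ)
    (hFconv : ∀ δ : ℝ, 0 < δ →
      Tendsto (fun n => μ {ω | ∃ t : ℝ, δ < |Fbar n ω t - F t|}) atTop (nhds 0))
    (hGconv : ∀ δ : ℝ, 0 < δ →
      Tendsto (fun n => μ {ω | ∃ t : ℝ, δ < |Gbar n ω t - G t|}) atTop (nhds 0))
    (hcross : ∀ n, ∀ᵐ ω ∂μ, Fbar n ω (muhat n ω) = Gbar n ω (muhat n ω)) :
    ∀ δ : ℝ, 0 < δ →
      Tendsto (fun n => μ {ω | δ < |min (2 * Fbar n ω (muhat n ω)) 1 - π₀|})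
        atTop (nhds 0) := by
  intro δ hδ
  obtain ⟨ε, hε, hnear⟩ :=
    abs_sub_lt_of_near_crossing_value hFmono hFcont hGanti hlt hgt (half_pos hδ)
  refine tendsto_measure_zero_of_ae_subset_union (fun n => ?_) (hFconv ε hε) (hGconv ε hε)
  filter_upwards [hcross n] with ω hω (hδω : δ < _)
  by_contra! hfar
  have hF : |Fbar n ω (muhat n ω) - F (muhat n ω)| ≤ ε :=
    not_lt.mp fun h => hfar (Or.inl ⟨_, h⟩)
  have hG : |Fbar n ω (muhat n ω) - G (muhat n ω)| ≤ ε :=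
    not_lt.mp fun h => hfar (Or.inr ⟨_, hω ▸ h⟩)
  have hy := hnear _ _ hF hG
  rw [hFmed] at hy
  have hest := abs_min_two_mul_one_sub_le hπ₀le (Fbar n ω (muhat n ω))
  linarith

/-- Under the crossing setup (`F` nondecreasing and continuous at `μ₀`
with `F(μ₀) = π₀/2`, `G` nonincreasing, `F < G` left of `μ₀` and `F > G` right of
`μ₀`), if `F̄ₙ, Ḡₙ` converge uniformly in probability to `F, G` and `μ̂ₙ` solves
`F̄ₙ(μ̂ₙ) = Ḡₙ(μ̂ₙ)` almost surely, then the empirical null-proportion estimator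
`π̂₀ₙ = min(2F̄ₙ(μ̂ₙ), 1)` converges in probability to `π₀`. -/
theorem null_proportion_estimator_consistent
    {Ω : Type*} [MeasurableSpace Ω] (μ : Measure Ω) [IsProbabilityMeasure μ]
    (π₀ : ℝ) (hπ₀pos : 0 < π₀) (hπ₀le : π₀ ≤ 1)
    (F G : ℝ → ℝ) (μ₀ : ℝ)
    (hFmono : Monotone F) (hFcont : ContinuousAt F μ₀) (hFmed : F μ₀ = π₀ / 2)
    (hGanti : Antitone G)
    (hlt : ∀ t, t < μ₀ → F t < G t) (hgt : ∀ t, μ₀ < t → G t < F t)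
    (Fbar Gbar : ℕ → Ω → ℝ → ℝ)
    (hFbarMeas : ∀ n, Measurable fun p : Ω × ℝ => Fbar n p.1 p.2)
    (hGbarMeas : ∀ n, Measurable fun p : Ω × ℝ => Gbar n p.1 p.2)
    (muhat : ℕ → Ω → ℝ) (hmuhatMeas : ∀ n, Measurable (muhat n))
    (hFconv : ∀ δ : ℝ, 0 < δ →
      Tendsto (fun n => μ {ω | ∃ t : ℝ, δ < |Fbar n ω t - F t|}) atTop (nhds 0))
    (hGconv : ∀ δ : ℝ, 0 < δ →
      Tendsto (fun n => μ {ω | ∃ t : ℝ, δ < |Gbar n ω t - G t|}) atTop (nhds 0))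
    (hcross : ∀ n, ∀ᵐ ω ∂μ, Fbar n ω (muhat n ω) = Gbar n ω (muhat n ω)) :
    ∀ δ : ℝ, 0 < δ →
      Tendsto (fun n => μ {ω | δ < |min (2 * Fbar n ω (muhat n ω)) 1 - π₀|})
        atTop (nhds 0) :=
  null_proportion_estimator_consistent_general μ π₀ hπ₀le F G μ₀ hFmono hFcont hFmed hGanti hlt hgt
    Fbar Gbar muhat hFconv hGconv hcross
end

section
/- Under the two-groups model with zero assumptions A3 and A4, suppose (πₙ) are random variables with πₙ → π₀ in probability, π₀ ∈ (0,1], and (F̄ₙ), (Ḡₙ) are sequences of random functions with F̄ₙ(t) → F(t) and Ḡₙ(t) → G(t) in probability for each fixed t ∈ ℝ. Define F̂₀ₙ(t) = F̄ₙ(t)/πₙ for t ≤ μ₀ and F̂₀ₙ(t) = 1 − Ḡₙ(t)/πₙ for t > μ₀. Then for every t ∈ ℝ, F̂₀ₙ(t) → F₀(t) in probability. -/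
/-!
Below the median A3 gives `F = π₀ F₀`, above it A4 gives `G = π₀ (1 - F₀)`. So `F₀(t)` is
`F(t) / π₀` resp. `1 - G(t) / π₀`, a function of `(F(t), π₀)` resp. `(G(t), π₀)` that is
continuous there since `π₀ ≠ 0`, and `F̂₀ₙ(t)` is the same function of the consistent estimators:
the continuous mapping theorem for convergence in probability applies.
-/

open MeasureTheory Filter

theorem tendsto_measure_abs_sub_gt_of_continuousAt {Ω ι : Type*} [MeasurableSpace Ω]
    {μ : Measure Ω} {l : Filter ι} {f g : ι → Ω → ℝ} {a b : ℝ} {h : ℝ → ℝ → ℝ}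
    (hf : ∀ δ : ℝ, 0 < δ → Tendsto (fun n => μ {ω | δ < |f n ω - a|}) l (nhds 0))
    (hg : ∀ δ : ℝ, 0 < δ → Tendsto (fun n => μ {ω | δ < |g n ω - b|}) l (nhds 0))
    (hh : ContinuousAt (Function.uncurry h) (a, b)) (δ : ℝ) (hδ : 0 < δ) :
    Tendsto (fun n => μ {ω | δ < |h (f n ω) (g n ω) - h a b|}) l (nhds 0) := by
  obtain ⟨η, hη, hcont⟩ := Metric.continuousAt_iff.mp hh δ hδ
  have hsub : ∀ n, {ω | δ < |h (f n ω) (g n ω) - h a b|} ⊆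
      {ω | η / 2 < |f n ω - a|} ∪ {ω | η / 2 < |g n ω - b|} := by
    intro n ω hω
    by_contra hcon
    simp only [Set.mem_union, Set.mem_ofPred_eq, not_or, not_lt] at hω hcon
    have hclose : dist (f n ω, g n ω) (a, b) < η := by
      rw [Prod.dist_eq, max_lt_iff, Real.dist_eq, Real.dist_eq]
      constructor <;> linarith
    have := hcont hclose
    rw [Real.dist_eq, Function.uncurry_apply_pair, Function.uncurry_apply_pair] at this
    linarith
  have hsum := (hf (η / 2) (half_pos hη)).add (hg (η / 2) (half_pos hη))
  rw [add_zero] at hsum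
  exact tendsto_of_tendsto_of_tendsto_of_le_of_le tendsto_const_nhds hsum (fun _ => zero_le)
    fun n => (measure_mono (hsub n)).trans (measure_union_le _ _)

theorem empirical_null_cdf_consistent_general
    {Ω : Type*} [MeasurableSpace Ω] (μ : Measure Ω)
    (π₀ : ℝ) (hπ₀pos : 0 < π₀)
    (F₀ F₁ G₁ : ℝ → ℝ) (μ₀ : ℝ)
    (hA3 : ∀ t, t ≤ μ₀ → F₁ t = 0)
    (hA4 : ∀ t, μ₀ ≤ t → G₁ t = 0)
    (F G : ℝ → ℝ)
    (hF : ∀ t, F t = π₀ * F₀ t + (1 - π₀) * F₁ t)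
    (hG : ∀ t, G t = π₀ * (1 - F₀ t) + (1 - π₀) * G₁ t)
    (πn : ℕ → Ω → ℝ)
    (hπconv : ∀ δ : ℝ, 0 < δ →
      Tendsto (fun n => μ {ω | δ < |πn n ω - π₀|}) atTop (nhds 0))
    (Fbar Gbar : ℕ → Ω → ℝ → ℝ)
    (hFconv : ∀ t : ℝ, ∀ δ : ℝ, 0 < δ →
      Tendsto (fun n => μ {ω | δ < |Fbar n ω t - F t|}) atTop (nhds 0))
    (hGconv : ∀ t : ℝ, ∀ δ : ℝ, 0 < δ →
      Tendsto (fun n => μ {ω | δ < |Gbar n ω t - G t|}) atTop (nhds 0))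
    (F₀hat : ℕ → Ω → ℝ → ℝ)
    (hF₀hat : ∀ n ω t, F₀hat n ω t =
      if t ≤ μ₀ then Fbar n ω t / πn n ω else 1 - Gbar n ω t / πn n ω) :
    ∀ t : ℝ, ∀ δ : ℝ, 0 < δ →
      Tendsto (fun n => μ {ω | δ < |F₀hat n ω t - F₀ t|}) atTop (nhds 0) := by
  intro t δ hδ
  have hdiv (x : ℝ) : ContinuousAt (fun p : ℝ × ℝ => p.1 / p.2) (x, π₀) :=
    continuousAt_fst.div continuousAt_snd hπ₀pos.ne'
  by_cases ht : t ≤ μ₀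
  · have hF₀t : F₀ t = F t / π₀ := by
      rw [hF t, hA3 t ht]
      field_simp
      ring
    simpa only [hF₀hat, if_pos ht, hF₀t] using
      tendsto_measure_abs_sub_gt_of_continuousAt (h := (· / ·)) (hFconv t) hπconv (hdiv _) δ hδ
  · have hF₀t : F₀ t = 1 - G t / π₀ := by
      rw [hG t, hA4 t (le_of_not_ge ht)]
      field_simp
      ring
    simpa only [hF₀hat, if_neg ht, hF₀t] using
      tendsto_measure_abs_sub_gt_of_continuousAt (h := fun x y => 1 - x / y) (hGconv t) hπconv
        (continuousAt_const.sub (hdiv _)) δ hδ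

/-- Under the two-groups model with zero assumptions A3 and A4, if
`πₙ → π₀` in probability with `π₀ ∈ (0,1]` and `F̄ₙ(t) → F(t)`, `Ḡₙ(t) → G(t)` in
probability pointwise, then the empirical null estimator
`F̂₀ₙ(t) = F̄ₙ(t)/πₙ` for `t ≤ μ₀`, `F̂₀ₙ(t) = 1 − Ḡₙ(t)/πₙ` for `t > μ₀`,
converges pointwise in probability to `F₀(t)`. -/
theorem empirical_null_cdf_consistent
    {Ω : Type*} [MeasurableSpace Ω] (μ : Measure Ω) [IsProbabilityMeasure μ]
    (π₀ : ℝ) (hπ₀pos : 0 < π₀) (hπ₀le : π₀ ≤ 1)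
    (F₀ F₁ G₁ : ℝ → ℝ) (μ₀ : ℝ)
    (hF₀mono : Monotone F₀) (hF₀range : ∀ t, 0 ≤ F₀ t ∧ F₀ t ≤ 1)
    (hF₁mono : Monotone F₁) (hF₁range : ∀ t, 0 ≤ F₁ t ∧ F₁ t ≤ 1)
    (hG₁anti : Antitone G₁) (hG₁range : ∀ t, 0 ≤ G₁ t ∧ G₁ t ≤ 1)
    (hmed : F₀ μ₀ = 1 / 2)
    (hmed_above : ∀ t, μ₀ < t → 1 / 2 < F₀ t)
    (hmed_below : ∀ t, t < μ₀ → F₀ t < 1 / 2)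
    (hA3 : ∀ t, t ≤ μ₀ → F₁ t = 0)
    (hA4 : ∀ t, μ₀ ≤ t → G₁ t = 0)
    (F G : ℝ → ℝ)
    (hF : ∀ t, F t = π₀ * F₀ t + (1 - π₀) * F₁ t)
    (hG : ∀ t, G t = π₀ * (1 - F₀ t) + (1 - π₀) * G₁ t)
    (πn : ℕ → Ω → ℝ)
    (hπconv : ∀ δ : ℝ, 0 < δ →
      Tendsto (fun n => μ {ω | δ < |πn n ω - π₀|}) atTop (nhds 0))
    (Fbar Gbar : ℕ → Ω → ℝ → ℝ)
    (hFconv : ∀ t : ℝ, ∀ δ : ℝ, 0 < δ →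
      Tendsto (fun n => μ {ω | δ < |Fbar n ω t - F t|}) atTop (nhds 0))
    (hGconv : ∀ t : ℝ, ∀ δ : ℝ, 0 < δ →
      Tendsto (fun n => μ {ω | δ < |Gbar n ω t - G t|}) atTop (nhds 0))
    (F₀hat : ℕ → Ω → ℝ → ℝ)
    (hF₀hat : ∀ n ω t, F₀hat n ω t =
      if t ≤ μ₀ then Fbar n ω t / πn n ω else 1 - Gbar n ω t / πn n ω) :
    ∀ t : ℝ, ∀ δ : ℝ, 0 < δ →
      Tendsto (fun n => μ {ω | δ < |F₀hat n ω t - F₀ t|}) atTop (nhds 0) :=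
  empirical_null_cdf_consistent_general μ π₀ hπ₀pos F₀ F₁ G₁ μ₀ hA3 hA4 F G hF hG πn hπconv Fbar
    Gbar hFconv hGconv F₀hat hF₀hat
end

section
/- In the finite-sample setup, define the empirical p-values pᵢ = 1 − F̂₀(aᵢ) for 1 ≤ i ≤ n. Then for every integer k with n₀ ≤ k ≤ 2n₀ − 1, setting ζ = k/(2n₀), Storey's estimator π̂₀*(ζ) = min( (1 + #{i : pᵢ > ζ}) / ((1 − ζ)·n), 1 ) equals the empirical null estimator π̂₀ = min(2n₀/n, 1). -/
open Finset

lemma rank_count (S : Finset ℝ) (r : ℕ) :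
    (S.filter fun x => (S.filter fun y => y ≤ x).card ≤ r).card = min r S.card := by
  classical
  set N := S.card with hN
  let e := S.orderIsoOfFin hN.symm
  have einj : Function.Injective (fun i : Fin N => (e i : ℝ)) := by
    intro i j h
    exact e.injective (Subtype.val_injective h)
  have key : ∀ j : Fin N, (S.filter fun y => y ≤ (e j : ℝ)).card = (j : ℕ) + 1 := by
    intro j
    have himg : S.filter (fun y => y ≤ (e j : ℝ)) =
        (Finset.Iic j).image (fun i => (e i : ℝ)) := by
      ext x
      simp only [Finset.mem_filter, Finset.mem_image, Finset.mem_Iic]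
      constructor
      · rintro ⟨hx, hle⟩
        refine ⟨e.symm ⟨x, hx⟩, ?_, by simp⟩
        rw [← e.le_iff_le, e.apply_symm_apply]
        exact hle
      · rintro ⟨i, hij, rfl⟩
        exact ⟨(e i).2, Subtype.coe_le_coe.mpr (e.le_iff_le.mpr hij)⟩
    rw [himg, Finset.card_image_of_injective _ einj, Fin.card_Iic]
  have himg2 : S.filter (fun x => (S.filter fun y => y ≤ x).card ≤ r)
      = (Finset.univ.filter fun j : Fin N => (j : ℕ) + 1 ≤ r).image (fun j => (e j : ℝ)) := by
    ext x
    simp only [Finset.mem_filter, Finset.mem_image, Finset.mem_univ, true_and]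
    constructor
    · rintro ⟨hx, hr⟩
      refine ⟨e.symm ⟨x, hx⟩, ?_, by simp⟩
      have hk := key (e.symm ⟨x, hx⟩)
      rw [e.apply_symm_apply] at hk
      rw [show ((⟨x, hx⟩ : {y // y ∈ S}) : ℝ) = x from rfl] at hk
      omega
    · rintro ⟨j, hj, rfl⟩
      refine ⟨(e j).2, ?_⟩
      rw [key j]; exact hj
  rw [himg2, Finset.card_image_of_injective _ einj]
  have himg3 : (Finset.univ.filter fun j : Fin N => (j : ℕ) + 1 ≤ r).image Fin.val
      = Finset.range (min r N) := by
    ext x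
    simp only [Finset.mem_image, Finset.mem_filter, Finset.mem_univ, true_and,
      Finset.mem_range]
    constructor
    · rintro ⟨j, hj, rfl⟩
      have := j.isLt
      omega
    · intro hx
      have hxN : x < N := by omega
      exact ⟨⟨x, hxN⟩, by simpa using by omega, rfl⟩
  have := Finset.card_image_of_injective
    (Finset.univ.filter fun j : Fin N => (j : ℕ) + 1 ≤ r) Fin.val_injective
  rw [himg3, Finset.card_range] at this
  omega

/-- In the finite-sample setup, with empirical p-values
`pᵢ = 1 − F̂₀(aᵢ)`, for every integer `k` with `n₀ ≤ k ≤ 2n₀ − 1` and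
`ζ = k/(2n₀)`, Storey's estimator
`π̂₀*(ζ) = min((1 + #{i : pᵢ > ζ})/((1 − ζ)n), 1)` equals the empirical null
estimator `π̂₀ = min(2n₀/n, 1)`. -/
theorem storey_estimator_eq_empirical_null_estimator
    {n : ℕ} (hn : 0 < n) (a b : Fin n → ℝ)
    (hdist : Function.Injective (Sum.elim a b))
    (s : Fin (2 * n) → ℝ) (hs : StrictMono s)
    (hrange : Set.range s = Set.range (Sum.elim a b))
    (μhat : ℝ) (hμ : μhat = (s ⟨n - 1, by omega⟩ + s ⟨n, by omega⟩) / 2)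
    (n₀ : ℕ) (hn₀a : n₀ = (Finset.univ.filter fun i => a i ≤ μhat).card)
    (hn₀b : n₀ = (Finset.univ.filter fun i => μhat < b i).card)
    (hn₀pos : 0 < n₀)
    (F₀hat : ℝ → ℝ)
    (hF₀hat : ∀ t, F₀hat t =
      ((((Finset.univ.filter fun i => a i ≤ μhat ∧ a i ≤ t).card
        + (Finset.univ.filter fun i => μhat < b i ∧ b i ≤ t).card : ℕ) : ℝ))
        / (2 * (n₀ : ℝ)))
    (p : Fin n → ℝ) (hp : ∀ i, p i = 1 - F₀hat (a i)) :
    ∀ k : ℕ, n₀ ≤ k → k ≤ 2 * n₀ - 1 →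
      min ((1 + ((Finset.univ.filter fun i => (k : ℝ) / (2 * (n₀ : ℝ)) < p i).card : ℝ))
            / ((1 - (k : ℝ) / (2 * (n₀ : ℝ))) * (n : ℝ))) 1
        = min (2 * (n₀ : ℝ) / (n : ℝ)) 1 := by
  classical
  intro k hk1 hk2
  have ha_inj : Function.Injective a := by
    intro i j h
    have := @hdist (Sum.inl i) (Sum.inl j) (by simpa using h)
    simpa using this
  have hkle : k < 2 * n₀ := by omega
  set m : ℕ := 2 * n₀ - k with hm
  have hm1 : 1 ≤ m := by omega
  have hm2 : m ≤ n₀ := by omega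
  have h2n₀pos : (0 : ℝ) < 2 * (n₀ : ℝ) := by positivity
  -- pointwise characterization
  have hiff : ∀ i : Fin n, ((k : ℝ) / (2 * (n₀ : ℝ)) < p i) ↔
      (a i ≤ μhat ∧
        (Finset.univ.filter fun j => a j ≤ μhat ∧ a j ≤ a i).card + 1 ≤ m) := by
    intro i
    rw [hp, hF₀hat]
    set c := (Finset.univ.filter fun j => a j ≤ μhat ∧ a j ≤ a i).card with hc
    set d := (Finset.univ.filter fun j => μhat < b j ∧ b j ≤ a i).card with hd
    have hlt : ((k : ℝ) / (2 * (n₀ : ℝ)) <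
        1 - ((c + d : ℕ) : ℝ) / (2 * (n₀ : ℝ))) ↔ k + (c + d) < 2 * n₀ := by
      rw [lt_sub_iff_add_lt, ← add_div, div_lt_one h2n₀pos]
      constructor
      · intro h
        exact_mod_cast (by push_cast at h ⊢; linarith : ((k + (c + d) : ℕ) : ℝ) < ((2 * n₀ : ℕ) : ℝ))
      · intro h
        push_cast
        exact_mod_cast (by exact_mod_cast h : ((k + (c + d) : ℕ) : ℝ) < ((2 * n₀ : ℕ) : ℝ))
    rw [hlt]
    by_cases hai : a i ≤ μhat
    · have hd0 : d = 0 := by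
        rw [hd, Finset.card_eq_zero, Finset.filter_eq_empty_iff]
        intro j _
        rintro ⟨hb1, hb2⟩
        exact absurd (hb2.trans hai) (not_le.mpr hb1)
      simp only [hai, true_and, hd0, add_zero]
      omega
    · have hcn : c = n₀ := by
        rw [hc, hn₀a]
        congr 1
        apply Finset.filter_congr
        intro j _
        constructor
        · rintro ⟨h1, _⟩; exact h1
        · intro h1; exact ⟨h1, le_of_lt (lt_of_le_of_lt h1 (not_le.mp hai))⟩
      constructor
      · intro h; omega
      · rintro ⟨h, _⟩; exact absurd h hai
  -- counting
  have hcount : (Finset.univ.filter fun i => (k : ℝ) / (2 * (n₀ : ℝ)) < p i).card = m - 1 := by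
    rw [Finset.filter_congr (fun i _ => hiff i)]
    rw [← Finset.filter_filter]
    set A := Finset.univ.filter (fun i : Fin n => a i ≤ μhat) with hA
    set S := A.image a with hS
    have hScard : S.card = n₀ := by
      rw [hS, Finset.card_image_of_injective _ ha_inj, ← hn₀a]
    have hSA : ∀ t : ℝ, (A.filter fun j => a j ≤ t).card = (S.filter fun y => y ≤ t).card := by
      intro t
      rw [hS, Finset.filter_image, Finset.card_image_of_injective _ ha_inj]
    have hstep : (A.filter fun i =>
        (Finset.univ.filter fun j => a j ≤ μhat ∧ a j ≤ a i).card + 1 ≤ m)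
        = A.filter fun i => (S.filter fun y => y ≤ a i).card ≤ m - 1 := by
      apply Finset.filter_congr
      intro i _
      rw [← Finset.filter_filter, ← hA, hSA (a i)]
      omega
    rw [hstep]
    have : (A.filter fun i => (S.filter fun y => y ≤ a i).card ≤ m - 1).card
        = (S.filter fun x => (S.filter fun y => y ≤ x).card ≤ m - 1).card := by
      rw [hS, Finset.filter_image, Finset.card_image_of_injective _ ha_inj]
    rw [this, rank_count, hScard]
    omega
  rw [hcount]
  congr 1
  have hn0 : (n : ℝ) ≠ 0 := Nat.cast_ne_zero.mpr hn.ne'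
  have hmm : ((m - 1 : ℕ) : ℝ) = (m : ℝ) - 1 := by
    push_cast [Nat.cast_sub hm1]; ring
  have hmk : (m : ℝ) = 2 * (n₀ : ℝ) - k := by
    rw [hm]; push_cast [Nat.cast_sub hkle.le]; ring
  have hmpos : (0 : ℝ) < (m : ℝ) := by exact_mod_cast hm1
  have h1 : (1 : ℝ) - (k : ℝ) / (2 * (n₀ : ℝ)) = (m : ℝ) / (2 * (n₀ : ℝ)) := by
    rw [hmk]; field_simp
  rw [hmm, h1]
  rw [show (1 : ℝ) + ((m : ℝ) - 1) = (m : ℝ) by ring]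
  have hm0 : (m : ℝ) ≠ 0 := hmpos.ne'
  have hn₀0 : (n₀ : ℝ) ≠ 0 := Nat.cast_ne_zero.mpr hn₀pos.ne'
  rw [div_mul_eq_mul_div]
  rw [div_div_eq_mul_div, div_eq_div_iff (by positivity) (by positivity)]
  ring
end

section
/- For the size-m LSS dictionary D^m with nonnegative autocorrelation Γ non-increasing in |u|, the coherence μ(D^m) = max_{i≠j} |⟨d_i^{(m)}, d_j^{(m)}⟩| equals the correlation between two consecutive atoms, namely Γ(2τ/(m−1)). Moreover, the coherence is nondecreasing in the dictionary size: μ(D^{m+1}) ≥ μ(D^m) for every m ≥ 2. -/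
/-!
Consecutive shifts differ by `Δ = 2τ/(m-1)`, so `⟨dᵢ, dⱼ⟩ = Γ(Δ(i - j))`. Distinct indices
have `|i - j| ≥ 1`, hence `|Δ(i - j)| ≥ |Δ|` and, `Γ` being non-increasing in `|u|`, every
off-diagonal correlation is at most `Γ(Δ)`, which is attained by neighbouring atoms. Enlarging
the dictionary shrinks the spacing `Δ`, so `Γ(Δ)` can only grow.
-/

lemma one_le_abs_natCast_sub_natCast {i j : ℕ} (hij : i ≠ j) :
    (1 : ℝ) ≤ |(i : ℝ) - j| := by
  have hz : (i : ℤ) - j ≠ 0 := sub_ne_zero.mpr (by exact_mod_cast hij)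
  exact_mod_cast Int.one_le_abs hz

section RadiallyNonincreasing

variable {Γ γ : ℝ → ℝ} (hΓ : ∀ u, Γ u = γ |u|) (hγ : Antitone γ)
include hΓ hγ

lemma apply_le_of_abs_le_abs {u v : ℝ} (huv : |u| ≤ |v|) : Γ v ≤ Γ u := by
  rw [hΓ u, hΓ v]
  exact hγ huv

lemma apply_mul_natCast_sub_le (Δ : ℝ) {i j : ℕ} (hij : i ≠ j) :
    Γ (Δ * (i - j)) ≤ Γ Δ :=
  apply_le_of_abs_le_abs hΓ hγ <| by
    rw [abs_mul]
    exact le_mul_of_one_le_right (abs_nonneg Δ) (one_le_abs_natCast_sub_natCast hij)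

theorem ciSup_offDiag_abs_eq {M : ℕ} (hM : 2 ≤ M) (hΓnonneg : ∀ u, 0 ≤ Γ u) (Δ : ℝ)
    (G : ℕ → ℕ → ℝ) (hG : ∀ i j, i < M → j < M → G i j = Γ (Δ * (i - j))) :
    ⨆ p : {q : Fin M × Fin M // q.1 ≠ q.2}, |G p.1.1 p.1.2| = Γ Δ := by
  have hM0 : 0 < M := by omega
  have hM1 : 1 < M := by omega
  let neighbours : {q : Fin M × Fin M // q.1 ≠ q.2} :=
    ⟨(⟨1, hM1⟩, ⟨0, hM0⟩), by simp [Fin.ext_iff]⟩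
  have : Nonempty {q : Fin M × Fin M // q.1 ≠ q.2} := ⟨neighbours⟩
  apply le_antisymm
  · refine ciSup_le fun ⟨(i, j), hij⟩ => ?_
    rw [hG i j i.isLt j.isLt, abs_of_nonneg (hΓnonneg _)]
    exact apply_mul_natCast_sub_le hΓ hγ Δ (Fin.val_ne_of_ne hij)
  · refine le_ciSup_of_le (Set.finite_range _).bddAbove neighbours ?_
    rw [hG 1 0 hM1 hM0]
    norm_num [le_abs_self]

end RadiallyNonincreasing

theorem lss_dictionary_coherence_general
    {l : ℕ} (τ : ℝ) (Γ γ : ℝ → ℝ)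
    (hΓ : ∀ u, Γ u = γ |u|) (hγ : Antitone γ)
    (hΓnonneg : ∀ u, 0 ≤ Γ u)
    (m : ℕ) (hm : 2 ≤ m)
    (d : ℕ → ℕ → Fin l → ℝ)
    (hcorr : ∀ M : ℕ, (M = m ∨ M = m + 1) → ∀ i j : ℕ, i < M → j < M →
      (∑ idx, d M i idx * d M j idx)
        = Γ ((-τ + (2 * τ / ((M : ℝ) - 1)) * (i : ℝ))
            - (-τ + (2 * τ / ((M : ℝ) - 1)) * (j : ℝ))))
    (coh : ℕ → ℝ)
    (hcoh : ∀ M : ℕ, coh M = ⨆ p : {q : Fin M × Fin M // q.1 ≠ q.2},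
      |∑ idx, d M ((p.1.1 : ℕ)) idx * d M ((p.1.2 : ℕ)) idx|) :
    coh m = Γ (2 * τ / ((m : ℝ) - 1)) ∧ coh m ≤ coh (m + 1) := by
  have hcoh_eq : ∀ M, (M = m ∨ M = m + 1) → coh M = Γ (2 * τ / ((M : ℝ) - 1)) := by
    intro M hM
    rw [hcoh M]
    refine ciSup_offDiag_abs_eq hΓ hγ (by omega) hΓnonneg (2 * τ / ((M : ℝ) - 1))
      (fun i j => ∑ idx, d M i idx * d M j idx) fun i j hi hj => ?_
    rw [hcorr M hM i j hi hj]
    ring_nf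
  refine ⟨hcoh_eq m (.inl rfl), ?_⟩
  rw [hcoh_eq m (.inl rfl), hcoh_eq (m + 1) (.inr rfl), Nat.cast_add_one, add_sub_cancel_right]
  have hm' : (2 : ℝ) ≤ m := by exact_mod_cast hm
  refine apply_le_of_abs_le_abs hΓ hγ ?_
  rw [abs_div, abs_div, abs_of_pos (by linarith : (0 : ℝ) < m),
    abs_of_pos (by linarith : (0 : ℝ) < m - 1)]
  exact div_le_div_of_nonneg_left (abs_nonneg _) (by linarith) (by linarith)

/-- For the size-`m` LSS dictionary with nonnegative autocorrelation
`Γ` non-increasing in `|u|`, the coherence `μ(D^m) = max_{i≠j} |⟨d_i, d_j⟩|`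
equals `Γ(2τ/(m−1))`, the correlation of two consecutive atoms; moreover the
coherence is nondecreasing in the dictionary size: `μ(D^{m+1}) ≥ μ(D^m)`. -/
theorem lss_dictionary_coherence
    {l : ℕ} (τ : ℝ) (hτ : 0 < τ) (Γ γ : ℝ → ℝ)
    (hΓ : ∀ u, Γ u = γ |u|) (hγ : Antitone γ) (hΓ0 : Γ 0 = 1)
    (hΓnonneg : ∀ u, 0 ≤ Γ u)
    (m : ℕ) (hm : 2 ≤ m)
    (d : ℕ → ℕ → Fin l → ℝ)
    (hpos : ∀ M k i, 0 ≤ d M k i)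
    (hcorr : ∀ M : ℕ, (M = m ∨ M = m + 1) → ∀ i j : ℕ, i < M → j < M →
      (∑ idx, d M i idx * d M j idx)
        = Γ ((-τ + (2 * τ / ((M : ℝ) - 1)) * (i : ℝ))
            - (-τ + (2 * τ / ((M : ℝ) - 1)) * (j : ℝ))))
    (coh : ℕ → ℝ)
    (hcoh : ∀ M : ℕ, coh M = ⨆ p : {q : Fin M × Fin M // q.1 ≠ q.2},
      |∑ idx, d M ((p.1.1 : ℕ)) idx * d M ((p.1.2 : ℕ)) idx|) :
    coh m = Γ (2 * τ / ((m : ℝ) - 1)) ∧ coh m ≤ coh (m + 1) :=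
  lss_dictionary_coherence_general τ Γ γ hΓ hγ hΓnonneg m hm d hcorr coh hcoh
end
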